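/- Let n ≥ 1, k ≥ 1, and let π be an increasing k-coloured permutation of order n. Write Rec(π,k) as the concatenation of the nk sublists Rec(ρ(π)_m,k)·r_m, Rec(ρ(π)_{m−1},k)·r_{m−1}, …, Rec(ρ(π)_1,k)·r_1 where m = nk. Then for every i ∈ {1,…,m}, the last permutation of the sublist Rec(ρ(π)_i,k)·r_i is decreasing, and it is the only decreasing permutation occurring in that sublist. -/

import Mathlib

/-- Increment the colour of every symbol of a coloured pre-permutation by `s`, modulo `k`. -/
def colShift (k s : ℕ) (p : List (ℕ × ℕ)) : List (ℕ × ℕ) :=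
  p.map (fun x => (x.1, (x.2 + s) % k))

/-- The colour-incrementing prefix-reversal of length `j` (a "flip"):
reverse the first `j` symbols and increment their colours by 1 modulo `k`. -/
def cflip (k j : ℕ) (p : List (ℕ × ℕ)) : List (ℕ × ℕ) :=
  colShift k 1 (p.take j).reverse ++ p.drop j

/-- `p` is a `k`-coloured permutation of order `n`: its values are a permutation
of `{1,…,n}` and all its colours lie in `{0,…,k-1}`. -/
def IsCPerm (n k : ℕ) (p : List (ℕ × ℕ)) : Prop :=
  (p.map Prod.fst).Perm ((List.range n).map (· + 1)) ∧ ∀ x ∈ p, x.2 < k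

/-- `p` is a pre-perm: distinct values from `{1,…,n}`, colours in `{0,…,k-1}`. -/
def IsPrePerm (n k : ℕ) (p : List (ℕ × ℕ)) : Prop :=
  (p.map Prod.fst).Nodup ∧ ∀ x ∈ p, (1 ≤ x.1 ∧ x.1 ≤ n) ∧ x.2 < k

/-- The circular string `ρ(p) = p^{+(k-1)} · p^{+(k-2)} ⋯ p^{+0}`. -/
def rho (k : ℕ) (p : List (ℕ × ℕ)) : List (ℕ × ℕ) :=
  ((List.range k).reverse).flatMap (fun s => colShift k s p)

/-- `ρ(p)_i`: the length `j-1` contiguous subword of the circular string `ρ(p)`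
ending with `r_{i-1}` (1-based indices modulo `m = k·j`, where `j = p.length`). -/
def rhoSub (k : ℕ) (p : List (ℕ × ℕ)) (i : ℕ) : List (ℕ × ℕ) :=
  (List.range (p.length - 1)).map
    (fun t => (rho k p).getD ((i + t + k * p.length - p.length) % (k * p.length)) (0, 0))

/-- Fuel-indexed version of the recursive listing `Rec(p,k)`; `fuel = p.length`. -/
def RecAux (k : ℕ) : ℕ → List (ℕ × ℕ) → List (List (ℕ × ℕ))
  | 0, p => (List.range k).map (fun s => colShift k s p)
  | fuel + 1, p =>
    if p.length ≤ 1 then (List.range k).map (fun s => colShift k s p)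
    else ((List.range (k * p.length)).reverse).flatMap
      (fun i => (RecAux k fuel (rhoSub k p (i + 1))).map (fun q => q ++ [(rho k p).getD i (0, 0)]))

/-- The recursive listing `Rec(p,k)`:
`Rec(p₁,k) = p₁, p₁^{+1}, …, p₁^{+(k-1)}` when `p` has length 1, and
`Rec(p,k) = Rec(ρ(p)_m,k)·r_m, Rec(ρ(p)_{m-1},k)·r_{m-1}, …, Rec(ρ(p)_1,k)·r_1` otherwise. -/
def RecList (k : ℕ) (p : List (ℕ × ℕ)) : List (List (ℕ × ℕ)) :=
  RecAux k p.length p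

/-- The identity coloured permutation `1⁰2⁰⋯n⁰`. -/
def idPerm (n : ℕ) : List (ℕ × ℕ) := (List.range n).map (fun i => (i + 1, 0))
/-- A coloured permutation is increasing if it is a length-`n` subword of the circular
string `ρ(1⁰2⁰⋯n⁰)`; equivalently, each symbol is followed either by the next value with
the same colour, or (when its value is `n`) by value `1` with colour decremented mod `k`. -/
def IsIncreasing (n k : ℕ) (p : List (ℕ × ℕ)) : Prop :=
  IsCPerm n k p ∧ ∀ i, i + 1 < p.length →
    ((p.getD i (0,0)).1 < n ∧ (p.getD (i+1) (0,0)).1 = (p.getD i (0,0)).1 + 1 ∧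
      (p.getD (i+1) (0,0)).2 = (p.getD i (0,0)).2) ∨
    ((p.getD i (0,0)).1 = n ∧ (p.getD (i+1) (0,0)).1 = 1 ∧
      (p.getD (i+1) (0,0)).2 = ((p.getD i (0,0)).2 + k - 1) % k)

/-- A permutation is decreasing if it is the reversal of an increasing permutation. -/
def IsDecreasing (n k : ℕ) (p : List (ℕ × ℕ)) : Prop := IsIncreasing n k p.reverse

/-- A pre-perm is decreasing if it is a subsequence of a decreasing permutation. -/
def IsDecreasingPre (n k : ℕ) (p : List (ℕ × ℕ)) : Prop :=
  ∃ q, IsDecreasing n k q ∧ p.Sublist q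

/-!
Let `cycSym n k e` be the symbol at position `e` of the periodic string (period `nk`) in which
every `v^c` is followed by `(v+1)^c`, or by `1^{c-1}` when `v = n`. The increasing permutations are
exactly its windows `incPerm n k e` of length `n`, and adding `s` to all colours moves a window
`n(k-s)` places along, so for `π = incPerm n k e` the circular string `ρ(π)` is the window of length
`nk` starting at `e + n`.

Unfolding the recursion along its last branch shows that the last entry of `Rec(p,k)` is the
reversal of `p^{+(k-1)}`. Hence the last permutation of the `i`-th sublist has reversal
`r_i · ρ(π)_i^{+(k-1)}`, which is again a window, so it is decreasing. A decreasing permutation is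
determined by its last symbol, and every permutation of the sublist ends with `r_i`.
-/

section

variable {n k : ℕ}

theorem List.reverse_eq_self_of_length_le_one {α : Type*} {l : List α} (h : l.length ≤ 1) :
    l.reverse = l := by
  rcases l with _ | ⟨a, _ | ⟨b, l⟩⟩ <;> simp_all

def colShiftSym (k s : ℕ) (x : ℕ × ℕ) : ℕ × ℕ := (x.1, (x.2 + s) % k)

theorem colShift_eq_map (k s : ℕ) (p : List (ℕ × ℕ)) :
    colShift k s p = p.map (colShiftSym k s) := rfl

theorem colShift_colShift (k s t : ℕ) (p : List (ℕ × ℕ)) :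
    colShift k t (colShift k s p) = colShift k (s + t) p := by
  simp [colShift_eq_map, colShiftSym, Function.comp_def, Nat.add_assoc]

def cycSucc (n k : ℕ) (x : ℕ × ℕ) : ℕ × ℕ :=
  if x.1 < n then (x.1 + 1, x.2) else (1, (x.2 + k - 1) % k)

theorem isIncreasing_step_iff {x y : ℕ × ℕ} (hx : x.1 ≤ n) :
    ((x.1 < n ∧ y.1 = x.1 + 1 ∧ y.2 = x.2) ∨ (x.1 = n ∧ y.1 = 1 ∧ y.2 = (x.2 + k - 1) % k)) ↔
      y = cycSucc n k x := by
  unfold cycSucc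
  split_ifs <;> rw [Prod.ext_iff] <;> omega

-- `(k - 1) * q ≡ -q [MOD k]`: the colour drops by one every `n` positions.
def cycSym (n k e : ℕ) : ℕ × ℕ := (e % n + 1, (k - 1) * (e / n) % k)

theorem cycSym_mul_add {q r : ℕ} (hr : r < n) :
    cycSym n k (n * q + r) = (r + 1, (k - 1) * q % k) := by
  have hn : 0 < n := by omega
  simp [cycSym, Nat.mod_eq_of_lt hr, Nat.mul_add_div hn, Nat.div_eq_of_lt hr]

theorem cycSucc_cycSym (hn : 0 < n) (hk : 0 < k) (e : ℕ) :
    cycSucc n k (cycSym n k e) = cycSym n k (e + 1) := by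
  obtain ⟨q, r, hr, rfl⟩ : ∃ q r, r < n ∧ e = n * q + r :=
    ⟨e / n, e % n, Nat.mod_lt e hn, (Nat.div_add_mod e n).symm⟩
  obtain ⟨k, rfl⟩ : ∃ k', k = k' + 1 := ⟨k - 1, by omega⟩
  rw [cycSym_mul_add hr, cycSucc]
  dsimp only
  split_ifs with h
  · rw [show n * q + r + 1 = n * q + (r + 1) by ring, cycSym_mul_add h]
  · rw [show n * q + r + 1 = n * (q + 1) + 0 by rw [Nat.mul_succ]; omega, cycSym_mul_add hn,
      Nat.add_succ_sub_one, Nat.add_sub_cancel, Nat.mod_add_mod, Nat.mul_succ]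

theorem cycSym_add_eq_iterate (hn : 0 < n) (hk : 0 < k) (e j : ℕ) :
    cycSym n k (e + j) = (cycSucc n k)^[j] (cycSym n k e) := by
  induction j with
  | zero => rfl
  | succ j ih => rw [Function.iterate_succ_apply', ← ih, cycSucc_cycSym hn hk, Nat.add_assoc]

theorem cycSym_congr {a b : ℕ} (h : a ≡ b [MOD n * k]) : cycSym n k a = cycSym n k b := by
  refine Prod.ext (congrArg (· + 1) (Nat.ModEq.of_mul_right k h)) ?_
  dsimp only [cycSym]
  rw [Nat.mul_mod, ← Nat.mod_mul_right_div_self, show a % (n * k) = b % (n * k) from h,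
    Nat.mod_mul_right_div_self, ← Nat.mul_mod]

theorem colShiftSym_cycSym (hn : 0 < n) (hk : 0 < k) {s : ℕ} (hs : s ≤ k) (e : ℕ) :
    colShiftSym k s (cycSym n k e) = cycSym n k (e + n * (k - s)) := by
  obtain ⟨q, r, hr, rfl⟩ : ∃ q r, r < n ∧ e = n * q + r :=
    ⟨e / n, e % n, Nat.mod_lt e hn, (Nat.div_add_mod e n).symm⟩
  rw [show n * q + r + n * (k - s) = n * (q + (k - s)) + r by ring, cycSym_mul_add hr,
    cycSym_mul_add hr, colShiftSym]
  refine Prod.ext rfl ((ZMod.natCast_eq_natCast_iff' _ _ k).1 ?_)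
  push_cast [ZMod.natCast_mod, Nat.cast_sub hs, Nat.cast_sub hk]
  simp only [ZMod.natCast_self]
  ring

theorem exists_cycSym_eq {x : ℕ × ℕ} (h1 : 1 ≤ x.1) (h2 : x.1 ≤ n) (hc : x.2 < k) :
    ∃ e, cycSym n k e = x := by
  refine ⟨x.1 - 1 + n * (k - x.2), ?_⟩
  rw [← colShiftSym_cycSym (by omega) (by omega) hc.le, cycSym, Nat.mod_eq_of_lt (by omega),
    Nat.div_eq_of_lt (by omega), colShiftSym]
  exact Prod.ext (by simp only; omega) (by simp [Nat.mod_eq_of_lt hc])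

theorem IsCPerm.length_eq {p : List (ℕ × ℕ)} (hp : IsCPerm n k p) : p.length = n := by
  simpa using hp.1.length_eq

theorem IsCPerm.bounds {p : List (ℕ × ℕ)} (hp : IsCPerm n k p) {x : ℕ × ℕ} (hx : x ∈ p) :
    (1 ≤ x.1 ∧ x.1 ≤ n) ∧ x.2 < k := by
  have := hp.1.subset (List.mem_map_of_mem hx)
  simp only [List.mem_map, List.mem_range] at this
  exact ⟨by omega, hp.2 x hx⟩

theorem isIncreasing_iff_cycSucc {p : List (ℕ × ℕ)} :
    IsIncreasing n k p ↔ IsCPerm n k p ∧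
      ∀ i, i + 1 < p.length → p.getD (i + 1) (0, 0) = cycSucc n k (p.getD i (0, 0)) := by
  refine and_congr_right fun hp => forall₂_congr fun i hi => isIncreasing_step_iff ?_
  rw [List.getD_eq_getElem _ _ (by omega)]
  exact (hp.bounds (List.getElem_mem _)).1.2

def incPerm (n k e : ℕ) : List (ℕ × ℕ) := (List.range n).map fun j => cycSym n k (e + j)

@[simp] theorem length_incPerm (e : ℕ) : (incPerm n k e).length = n := by simp [incPerm]

@[simp] theorem getElem_incPerm {e j : ℕ} (hj : j < (incPerm n k e).length) :
    (incPerm n k e)[j] = cycSym n k (e + j) := by simp [incPerm]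

theorem getD_incPerm {e j : ℕ} (hj : j < n) (d : ℕ × ℕ) :
    (incPerm n k e).getD j d = cycSym n k (e + j) := by
  rw [List.getD_eq_getElem _ _ (by simpa), getElem_incPerm]

theorem isIncreasing_incPerm (hn : 0 < n) (hk : 0 < k) (e : ℕ) :
    IsIncreasing n k (incPerm n k e) := by
  have hvals : ((List.range n).map fun j => (e + j) % n).Perm (List.range n) := by
    refine (List.subperm_of_subset ?_ fun a ha => ?_).perm_of_length_le (by simp)
    · refine List.nodup_range.map_on fun i hi j hj hij => ?_
      simp only [List.mem_range] at hi hj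
      have := Nat.ModEq.add_left_cancel' e hij
      rwa [Nat.ModEq, Nat.mod_eq_of_lt hi, Nat.mod_eq_of_lt hj] at this
    · obtain ⟨j, -, rfl⟩ := List.mem_map.1 ha
      exact List.mem_range.2 (Nat.mod_lt _ hn)
  refine isIncreasing_iff_cycSucc.2 ⟨⟨?_, fun x hx => ?_⟩, fun i hi => ?_⟩
  · simpa [incPerm, cycSym, Function.comp_def] using hvals.map (· + 1)
  · obtain ⟨j, -, rfl⟩ := List.mem_map.1 hx
    exact Nat.mod_lt _ hk
  · simp only [length_incPerm] at hi
    rw [getD_incPerm hi, getD_incPerm (by omega), cycSucc_cycSym hn hk, Nat.add_assoc]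

theorem IsIncreasing.exists_eq_incPerm (hn : 0 < n) {p : List (ℕ × ℕ)}
    (hp : IsIncreasing n k p) :
    ∃ e, p = incPerm n k e := by
  obtain ⟨hcp, hsucc⟩ := isIncreasing_iff_cycSucc.1 hp
  have hlen := hcp.length_eq
  have h0 : p.getD 0 (0, 0) = p[0] := List.getD_eq_getElem _ _ (by omega)
  obtain ⟨⟨h1, h2⟩, hc⟩ := hcp.bounds (List.getElem_mem (by omega : 0 < p.length))
  obtain ⟨e, he⟩ := exists_cycSym_eq h1 h2 hc
  have key : ∀ j < n, p.getD j (0, 0) = cycSym n k (e + j) := by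
    intro j hj
    induction j with
    | zero => rw [h0, Nat.add_zero, he]
    | succ j ih =>
      rw [hsucc j (by omega), ih (by omega), cycSucc_cycSym hn (by omega), Nat.add_assoc]
  refine ⟨e, List.ext_getElem (by simp [hlen]) fun j hj _ => ?_⟩
  rw [getElem_incPerm, ← key j (by omega), List.getD_eq_getElem]

theorem IsIncreasing.eq_of_head?_eq (hn : 0 < n) {p p' : List (ℕ × ℕ)} (hp : IsIncreasing n k p)
    (hp' : IsIncreasing n k p') (h : p.head? = p'.head?) : p = p' := by
  obtain ⟨e, rfl⟩ := hp.exists_eq_incPerm hn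
  obtain ⟨e', rfl⟩ := hp'.exists_eq_incPerm hn
  have hk : 0 < k := (hp.1.bounds (List.getElem_mem (by simpa using hn))).2.pos
  have he : cycSym n k e = cycSym n k e' := by
    simpa [incPerm, List.head?_range, hn.ne'] using h
  simp only [incPerm, cycSym_add_eq_iterate hn hk, he]

theorem IsDecreasing.eq_of_getLast?_eq (hn : 0 < n) {q q' : List (ℕ × ℕ)}
    (hq : IsDecreasing n k q) (hq' : IsDecreasing n k q') (h : q.getLast? = q'.getLast?) : q = q' :=
  List.reverse_injective (IsIncreasing.eq_of_head?_eq hn hq hq' (by simpa using h))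

theorem getElem?_flatMap_colShift (p : List (ℕ × ℕ)) {m b r : ℕ} (hb : b < m)
    (hr : r < p.length) :
    ((List.range m).reverse.flatMap fun s => colShift k s p)[b * p.length + r]? =
      some (colShiftSym k (m - 1 - b) p[r]) := by
  induction m generalizing b with
  | zero => omega
  | succ m ih =>
    have hlen : (colShift k m p).length = p.length := List.length_map _
    rw [List.range_succ, List.reverse_append, List.reverse_singleton, List.singleton_append,
      List.flatMap_cons]
    rcases b with _ | b
    · rw [Nat.zero_mul, Nat.zero_add, List.getElem?_append_left (by omega), colShift_eq_map,
        List.getElem?_map, List.getElem?_eq_getElem hr, Option.map_some, Nat.add_sub_cancel,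
        Nat.sub_zero]
    · rw [List.getElem?_append_right (by rw [hlen, Nat.succ_mul]; omega), hlen,
        show (b + 1) * p.length + r - p.length = b * p.length + r by rw [Nat.succ_mul]; omega,
        ih (by omega), show m + 1 - 1 - (b + 1) = m - 1 - b by omega]

theorem getElem?_rho (p : List (ℕ × ℕ)) {b r : ℕ} (hb : b < k) (hr : r < p.length) :
    (rho k p)[b * p.length + r]? = some (colShiftSym k (k - 1 - b) p[r]) :=
  getElem?_flatMap_colShift p hb hr

theorem getD_rho_incPerm (hn : 0 < n) (hk : 0 < k) (e : ℕ) {j : ℕ} (hj : j < k * n) :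
    (rho k (incPerm n k e)).getD j (0, 0) = cycSym n k (e + n + j) := by
  obtain ⟨q, r, hr, rfl⟩ : ∃ q r, r < n ∧ j = q * n + r :=
    ⟨j / n, j % n, Nat.mod_lt j hn, (Nat.div_add_mod' j n).symm⟩
  have hq : q < k := Nat.lt_of_mul_lt_mul_right (a := n) (by omega)
  have := getElem?_rho (incPerm n k e) hq (by simpa using hr)
  rw [getElem_incPerm, length_incPerm] at this
  rw [List.getD_eq_getElem?_getD, this, Option.getD_some,
    colShiftSym_cycSym hn hk (by omega), show k - (k - 1 - q) = q + 1 by omega]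
  congr 1
  ring

theorem rhoSub_incPerm (hn : 0 < n) (hk : 0 < k) (e i : ℕ) :
    rhoSub k (incPerm n k e) i = (List.range (n - 1)).map fun t => cycSym n k (e + i + t) := by
  simp only [rhoSub, length_incPerm]
  refine List.map_congr_left fun t _ => ?_
  have hkn : n ≤ k * n := Nat.le_mul_of_pos_left n hk
  rw [getD_rho_incPerm hn hk e (Nat.mod_lt _ (by omega))]
  apply cycSym_congr
  rw [Nat.mul_comm n k]
  calc e + n + (i + t + k * n - n) % (k * n)
      ≡ e + n + (i + t + k * n - n) [MOD k * n] := (Nat.mod_modEq _ _).add_left _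
    _ = e + i + t + k * n := by omega
    _ ≡ e + i + t [MOD k * n] := Nat.add_mod_right _ _

theorem incPerm_eq_cons_colShift_rhoSub (hn : 0 < n) (hk : 0 < k) (e : ℕ) {i : ℕ} (hi : 1 ≤ i)
    (hi' : i ≤ k * n) :
    incPerm n k (e + n + (i - 1)) =
      (rho k (incPerm n k e)).getD (i - 1) (0, 0) ::
        colShift k (k - 1) (rhoSub k (incPerm n k e) i) := by
  rw [getD_rho_incPerm hn hk e (by omega), rhoSub_incPerm hn hk, colShift_eq_map, List.map_map]
  obtain ⟨n, rfl⟩ : ∃ n', n = n' + 1 := ⟨n - 1, by omega⟩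
  rw [incPerm, List.range_succ_eq_map, List.map_cons, List.map_map, Nat.add_zero,
    Nat.add_sub_cancel]
  refine congrArg _ (List.map_congr_left fun t _ => ?_)
  rw [Function.comp_apply, Function.comp_apply, colShiftSym_cycSym hn hk (Nat.sub_le k 1),
    Nat.sub_sub_self hk, Nat.mul_one]
  congr 1
  omega

theorem getLast?_map_range_colShift (hk : 0 < k) (p : List (ℕ × ℕ)) :
    ((List.range k).map fun s => colShift k s p).getLast? = some (colShift k (k - 1) p) := by
  simp [List.getLast?_range, hk.ne']

theorem rhoSub_one (hk : 0 < k) (p : List (ℕ × ℕ)) : rhoSub k p 1 = colShift k 0 p.tail := by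
  refine List.ext_getElem (by simp [rhoSub, colShift]) fun t ht _ => ?_
  simp only [rhoSub, List.length_map, List.length_range] at ht
  obtain ⟨k, rfl⟩ : ∃ k', k = k' + 1 := ⟨k - 1, by omega⟩
  have hidx : (1 + t + (k + 1) * p.length - p.length) % ((k + 1) * p.length) =
      k * p.length + (t + 1) := by
    rw [Nat.succ_mul, Nat.mod_eq_of_lt (by omega)]
    omega
  have hrho := getElem?_rho p (b := k) (r := t + 1) (lt_add_one k) (by omega)
  simp only [rhoSub, List.getElem_map, List.getElem_range, hidx, List.getD_eq_getElem?_getD,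
    hrho, Option.getD_some, colShift_eq_map, List.getElem_tail, Nat.add_sub_cancel, Nat.sub_self]

theorem getLast?_recAux (hk : 0 < k) (fuel : ℕ) (p : List (ℕ × ℕ)) (hp : p.length ≤ fuel + 1) :
    (RecAux k fuel p).getLast? = some (colShift k (k - 1) p).reverse := by
  induction fuel generalizing p with
  | zero =>
    rw [RecAux, getLast?_map_range_colShift hk, List.reverse_eq_self_of_length_le_one]
    simpa [colShift] using hp
  | succ fuel ih =>
    rw [RecAux]
    split_ifs with h
    · rw [getLast?_map_range_colShift hk, List.reverse_eq_self_of_length_le_one]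
      simpa [colShift] using h
    obtain ⟨a, t, rfl⟩ : ∃ a t, p = a :: t := List.exists_cons_of_length_pos (by omega)
    have hr0 := getElem?_rho (a :: t) hk (r := 0) (by simp)
    rw [Nat.zero_mul, Nat.zero_add, List.getElem_cons_zero, Nat.sub_zero] at hr0
    rw [List.getLast?_flatMap, List.reverse_reverse,
      show k * (a :: t).length = (k * (a :: t).length - 1) + 1 from
        (Nat.sub_add_cancel (Nat.mul_pos hk (by simp))).symm,
      List.range_succ_eq_map, List.findSome?_cons, List.getLast?_map,
      ih _ (by simp [rhoSub] at hp ⊢; omega), rhoSub_one hk, colShift_colShift, Nat.zero_add,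
      List.getD_eq_getElem?_getD, hr0]
    simp [colShift_eq_map]

theorem getLast?_recList (hk : 0 < k) (p : List (ℕ × ℕ)) :
    (RecList k p).getLast? = some (colShift k (k - 1) p).reverse :=
  getLast?_recAux hk _ p (Nat.le_succ _)

end

theorem sublist_unique_decreasing_general (n k : ℕ)
    (π : List (ℕ × ℕ)) (hπ : IsIncreasing n k π) :
    ∀ i, 1 ≤ i → i ≤ n * k →
      ∃ last,
        ((RecList k (rhoSub k π i)).map
            (fun q => q ++ [(rho k π).getD (i - 1) (0, 0)])).getLast? = some last ∧
        IsDecreasing n k last ∧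
        ∀ q ∈ (RecList k (rhoSub k π i)).map
            (fun q => q ++ [(rho k π).getD (i - 1) (0, 0)]),
          IsDecreasing n k q → q = last := by
  intro i hi hi'
  have hn : 0 < n := Nat.pos_of_mul_pos_right (by omega : 0 < n * k)
  have hk : 0 < k := Nat.pos_of_mul_pos_left (by omega : 0 < n * k)
  obtain ⟨e, rfl⟩ := hπ.exists_eq_incPerm hn
  set r := (rho k (incPerm n k e)).getD (i - 1) (0, 0)
  set last := (colShift k (k - 1) (rhoSub k (incPerm n k e) i)).reverse ++ [r]
  have hlast : IsDecreasing n k last := by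
    rw [IsDecreasing, List.reverse_append, List.reverse_reverse, List.reverse_singleton,
      List.singleton_append,
      ← incPerm_eq_cons_colShift_rhoSub hn hk e hi (by rwa [Nat.mul_comm])]
    exact isIncreasing_incPerm hn hk _
  refine ⟨last, by rw [List.getLast?_map, getLast?_recList hk]; rfl, hlast, ?_⟩
  rintro _ hq hqdec
  obtain ⟨q, -, rfl⟩ := List.mem_map.1 hq
  exact hqdec.eq_of_getLast?_eq hn hlast (by simp [last])

/-- Let `n,k ≥ 1` and let `π` be an increasing coloured permutation
of order `n`, so that `Rec(π,k)` is the concatenation of the `m = nk` sublists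
`Rec(ρ(π)_m,k)·r_m, …, Rec(ρ(π)_1,k)·r_1`. Then for every `i ∈ {1,…,m}`, the last
permutation of the sublist `Rec(ρ(π)_i,k)·r_i` is decreasing, and it is the only
decreasing permutation occurring in that sublist. -/
theorem sublist_unique_decreasing (n k : ℕ) (hn : 1 ≤ n) (hk : 1 ≤ k)
    (π : List (ℕ × ℕ)) (hπ : IsIncreasing n k π) :
    ∀ i, 1 ≤ i → i ≤ n * k →
      ∃ last,
        ((RecList k (rhoSub k π i)).map
            (fun q => q ++ [(rho k π).getD (i - 1) (0, 0)])).getLast? = some last ∧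
        IsDecreasing n k last ∧
        ∀ q ∈ (RecList k (rhoSub k π i)).map
            (fun q => q ++ [(rho k π).getD (i - 1) (0, 0)]),
          IsDecreasing n k q → q = last :=
  sublist_unique_decreasing_general n k π hπ
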